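/- The higher topology makes K{{t}} into a locally convex topological K-vector space: for every sequence (n_i)_{i∈ℤ} ⊂ ℤ ∪ {-∞} such that (i) there is c ∈ ℤ with n_i ≤ c for all i, and (ii) n_i → -∞ as i → ∞, the set Λ = Σ_{i∈ℤ} 𝔭^{n_i} t^i is an 𝒪-lattice in K{{t}}, and these sets form a basis of neighbourhoods of zero for the higher topology. -/

import Mathlib

/-!
Common setting: `K` is a characteristic-zero local field (a finite extension of `ℚ_p`)
with ring of integers `𝒪 = {c : K | ‖c‖ ≤ 1}`, maximal ideal `𝔭 = {c : K | ‖c‖ < 1}`,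
residue field of cardinality `q` and the absolute value normalised by `‖π‖ = q⁻¹`.
We formalise the two-dimensional local fields `K((t))` (as `LaurentSeries K`) and
`K{{t}}` (as the submodule `mixedCarrier K` of `ℤ → K`), their higher topologies, and
the relevant functional-analytic notions (lattices, seminorms, boundedness,
c-compactness, compactoidness, completeness for nets, duality).
-/

open Filter Topology Set Pointwise
open scoped Classical

noncomputable section

namespace TwoDimLF

variable (K : Type) [NontriviallyNormedField K]

/-- `K` is a characteristic-zero nonarchimedean local field: the norm is nonarchimedean,
takes the values `q^ℤ` on `K˟` (with a uniformizer of norm `q⁻¹`), `K` is complete, locally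
compact, of characteristic zero, and the residue field has exactly `q` elements. -/
structure IsCharZeroLocalField (q : ℕ) : Prop where
  nonarch : ∀ x y : K, ‖x + y‖ ≤ max ‖x‖ ‖y‖
  one_lt_q : 1 < q
  norm_values : ∀ x : K, x ≠ 0 → ∃ n : ℤ, ‖x‖ = (q : ℝ) ^ (-n)
  exists_uniformizer : ∃ π : K, ‖π‖ = ((q : ℝ))⁻¹
  charZero : CharZero K
  locallyCompact : LocallyCompactSpace K
  complete : CompleteSpace K
  residue_card : ∃ s : Finset K, s.card = q ∧
    ∀ x : K, ‖x‖ ≤ 1 → ∃! y, y ∈ s ∧ ‖x - y‖ < 1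

/-- The fractional ideal `𝔭^n ⊆ K` for `n ∈ ℤ ∪ {-∞}`, with the convention `𝔭^(-∞) = K`. -/
def pB (q : ℕ) (n : WithBot ℤ) : Set K :=
  WithBot.recBotCoe Set.univ (fun m : ℤ => {x : K | ‖x‖ ≤ (q : ℝ) ^ (-m)}) n

/-- The fractional ideal `𝔭^n ⊆ K` for `n ∈ ℤ ∪ {∞}`, with the convention `𝔭^∞ = {0}`. -/
def pT (q : ℕ) (n : WithTop ℤ) : Set K :=
  WithTop.recTopCoe {0} (fun m : ℤ => {x : K | ‖x‖ ≤ (q : ℝ) ^ (-m)}) n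

/-- The fractional ideal `𝔭^n ⊆ K` for `n ∈ ℤ ∪ {±∞}`. -/
def pE (q : ℕ) (n : WithBot (WithTop ℤ)) : Set K :=
  WithBot.recBotCoe Set.univ (fun m : WithTop ℤ => pT K q m) n

/-- `q ^ n ∈ ℝ` for `n ∈ ℤ ∪ {-∞}`, with the convention `q^(-∞) = 0`. -/
def qpow (q : ℕ) (n : WithBot ℤ) : ℝ :=
  WithBot.recBotCoe 0 (fun m : ℤ => (q : ℝ) ^ m) n

/-- `1 - k` for `k ∈ ℤ ∪ {±∞}` (so `1 - (±∞) = ∓∞`). -/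
def oneSubE : WithBot (WithTop ℤ) → WithBot (WithTop ℤ) :=
  WithBot.recBotCoe ((⊤ : WithTop ℤ) : WithBot (WithTop ℤ))
    (WithTop.recTopCoe (⊥ : WithBot (WithTop ℤ))
      (fun z : ℤ => (((1 - z : ℤ) : WithTop ℤ) : WithBot (WithTop ℤ))))

section LCS

variable {V : Type} [AddCommGroup V] [Module K V]

/-- `S` is an `𝒪`-submodule of the `K`-vector space `V`, where `𝒪 = {c : K | ‖c‖ ≤ 1}`
is the ring of integers of `K`. -/
def IsOSubmodule (S : Set V) : Prop :=
  (0 : V) ∈ S ∧ (∀ x ∈ S, ∀ y ∈ S, x + y ∈ S) ∧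
    ∀ c : K, ‖c‖ ≤ 1 → ∀ x ∈ S, c • x ∈ S

/-- `S` is an `𝒪`-lattice in `V`: an `𝒪`-submodule such that every vector is carried
into `S` by some nonzero scalar. -/
def IsLatticeSet (S : Set V) : Prop :=
  IsOSubmodule K S ∧ ∀ v : V, ∃ a : K, a ≠ 0 ∧ a • v ∈ S

/-- A (nonarchimedean) seminorm on the `K`-vector space `V`. -/
def IsSeminorm (N : V → ℝ) : Prop :=
  (∀ (c : K) (v : V), N (c • v) = ‖c‖ * N v) ∧ ∀ v w : V, N (v + w) ≤ max (N v) (N w)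

/-- The gauge seminorm of a lattice `Λ ⊆ V`: `‖v‖_Λ = inf {‖a‖ : v ∈ aΛ}`. -/
def gaugeSeminorm (Λ : Set V) (v : V) : ℝ :=
  sInf {r : ℝ | ∃ a : K, v ∈ a • Λ ∧ r = ‖a‖}

/-- The group topology on `W` determined by a family `B` of neighbourhoods of zero:
neighbourhoods of `x` are generated by the translates `x + U`, `U ∈ B`. -/
def addTopologyOf {W : Type} [AddCommGroup W] (B : Set (Set W)) : TopologicalSpace W :=
  TopologicalSpace.mkOfNhds fun x => Filter.map (fun v => x + v) (⨅ U ∈ B, Filter.principal U)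

/-- `B` is (Von-Neumann) bounded for the locally convex topology `τ`: every open lattice
absorbs it. -/
def IsVNBounded (τ : TopologicalSpace V) (B : Set V) : Prop :=
  ∀ Λ : Set V, IsLatticeSet K Λ → IsOpen[τ] Λ → ∃ a : K, B ⊆ a • Λ

/-- The `𝒪`-submodule `A ⊆ V` is c-compact: for every decreasing filtered family of open
lattices `L i`, the canonical map `A → lim A/(L i ∩ A)` is surjective (phrased via
compatible families of representatives). -/
def IsCCompact (τ : TopologicalSpace V) (A : Set V) : Prop :=
  ∀ (ι : Type) (L : ι → Set V),
    (∀ i, IsLatticeSet K (L i) ∧ IsOpen[τ] (L i)) →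
    (∀ i j, ∃ k, L k ⊆ L i ∧ L k ⊆ L j) →
    ∀ x : ι → V, (∀ i, x i ∈ A) →
      (∀ i j, L j ⊆ L i → x j - x i ∈ L i) →
      ∃ a ∈ A, ∀ i, a - x i ∈ L i

/-- The `𝒪`-submodule `A ⊆ V` is compactoid: for every open lattice `Λ` there are finitely
many vectors `v₁, …, v_m ∈ V` with `A ⊆ Λ + 𝒪v₁ + ⋯ + 𝒪v_m`. -/
def IsCompactoid (τ : TopologicalSpace V) (A : Set V) : Prop :=
  ∀ Λ : Set V, IsLatticeSet K Λ → IsOpen[τ] Λ →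
    ∃ (m : ℕ) (v : Fin m → V),
      A ⊆ {u : V | ∃ l ∈ Λ, ∃ c : Fin m → K, (∀ j, ‖c j‖ ≤ 1) ∧ u = l + ∑ j, c j • v j}

/-- `A ⊆ V` is complete: every Cauchy net with values in `A` converges to a point of `A`
(for the topology `τ`). -/
def IsNetComplete (τ : TopologicalSpace V) (A : Set V) : Prop :=
  ∀ (ι : Type) [Preorder ι] [Nonempty ι],
    (∀ i j : ι, ∃ k, i ≤ k ∧ j ≤ k) →
    ∀ x : ι → V, (∀ i, x i ∈ A) →
      (∀ U ∈ @nhds V τ 0, ∃ i0, ∀ j ≥ i0, ∀ k ≥ i0, x j - x k ∈ U) →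
      ∃ a ∈ A, Filter.Tendsto x Filter.atTop (@nhds V τ a)

/-- `τ` makes `V` a locally convex topological `K`-vector space: it is a vector-space
topology whose filter of neighbourhoods of zero admits a basis of lattices. -/
def IsLCTVS (τ : TopologicalSpace V) : Prop :=
  @IsTopologicalAddGroup V τ _ ∧ @ContinuousSMul K V _ _ τ ∧
    ∀ S ∈ @nhds V τ 0, ∃ Λ : Set V, IsLatticeSet K Λ ∧ Λ ∈ @nhds V τ 0 ∧ Λ ⊆ S

/-- The topological dual of `(V, τ)`: continuous `K`-linear forms, as a set of functions. -/
def dualSet (τ : TopologicalSpace V) : Set (V → K) :=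
  {l | IsLinearMap K l ∧ @Continuous V K τ _ l}

/-- Basic neighbourhoods of zero for the `c`-topology on `V → K`: uniform convergence on
compactoid `𝒪`-submodules. -/
def cTopBasic (τ : TopologicalSpace V) : Set (Set (V → K)) :=
  {S | ∃ (B : Set V) (ε : ℝ), IsOSubmodule K B ∧ IsCompactoid K τ B ∧ 0 < ε ∧
    S = {l : V → K | ∀ x ∈ B, ‖l x‖ ≤ ε}}

/-- The `c`-topology (uniform convergence on compactoid `𝒪`-submodules) on `V → K`. -/
def cTop (τ : TopologicalSpace V) : TopologicalSpace (V → K) :=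
  addTopologyOf (cTopBasic K τ)

/-- The pseudo-polar `A^p = {l ∈ V' : |l(v)| < 1 for all v ∈ A}`. -/
def pseudoPolar (τ : TopologicalSpace V) (A : Set V) : Set (V → K) :=
  {l | l ∈ dualSet K τ ∧ ∀ v ∈ A, ‖l v‖ < 1}

/-- The pseudo-bipolar `A^{pp} = {v ∈ V : |l(v)| < 1 for all l ∈ A^p}`. -/
def pseudoBipolar (τ : TopologicalSpace V) (A : Set V) : Set V :=
  {v | ∀ l ∈ pseudoPolar K τ A, ‖l v‖ < 1}

end LCS

/-! ### The equal characteristic field `K((t))` -/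

/-- Basic neighbourhoods of zero for the higher topology on `K((t))`:
`Σ U_i t^i` where each `U_i` is an open neighbourhood of `0` in `K` and `U_i = K` for all
sufficiently large `i`. -/
def laurentBasic : Set (Set (LaurentSeries K)) :=
  {S | ∃ U : ℤ → Set K, (∀ i, IsOpen (U i) ∧ (0 : K) ∈ U i) ∧
    (∃ N : ℤ, ∀ i, N ≤ i → U i = Set.univ) ∧
    S = {f : LaurentSeries K | ∀ i, f.coeff i ∈ U i}}

/-- The higher topology on `K((t))`. -/
def laurentTop : TopologicalSpace (LaurentSeries K) := addTopologyOf (laurentBasic K)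

/-- `Λ = Σ_{i∈ℤ} 𝔭^{n_i} t^i ⊆ K((t))` for a sequence `(n_i) ⊆ ℤ ∪ {-∞}`. -/
def laurentLambda (q : ℕ) (n : ℤ → WithBot ℤ) : Set (LaurentSeries K) :=
  {f | ∀ i, f.coeff i ∈ pB K q (n i)}

/-- `B = Σ_{i∈ℤ} 𝔭^{k_i} t^i ⊆ K((t))` for a sequence `(k_i) ⊆ ℤ ∪ {∞}`. -/
def laurentPT (q : ℕ) (k : ℤ → WithTop ℤ) : Set (LaurentSeries K) :=
  {f | ∀ i, f.coeff i ∈ pT K q (k i)}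

/-- `A = Σ_{i∈ℤ} 𝔭^{k_i} t^i ⊆ K((t))` for a sequence `(k_i) ⊆ ℤ ∪ {±∞}`. -/
def laurentPE (q : ℕ) (k : ℤ → WithBot (WithTop ℤ)) : Set (LaurentSeries K) :=
  {f | ∀ i, f.coeff i ∈ pE K q (k i)}

/-- The admissible seminorm `‖Σ x_i t^i‖ = max_i ‖x_i‖ q^{n_i}` on `K((t))`. -/
def laurentSeminorm (q : ℕ) (n : ℤ → WithBot ℤ) (f : LaurentSeries K) : ℝ :=
  sSup {r : ℝ | ∃ i : ℤ, r = ‖f.coeff i‖ * qpow q (n i)}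

/-- The ring of integers `K[[t]] ⊆ K((t))`. -/
def laurentIntegers : Set (LaurentSeries K) := {f | ∀ i, i < 0 → f.coeff i = 0}

/-- The rank-two ring of integers `𝒪 + tK[[t]] ⊆ K((t))`. -/
def laurentRankTwo : Set (LaurentSeries K) :=
  {f | (∀ i, i < 0 → f.coeff i = 0) ∧ ‖f.coeff 0‖ ≤ 1}

/-- The pairing `γ(x)(y) = π₀(xy) = Σ_i x_i y_{-i}` on `K((t))`. -/
def laurentPairing (x y : LaurentSeries K) : K := ∑' i : ℤ, x.coeff i * y.coeff (-i)

/-! ### The mixed characteristic field `K{{t}}` -/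

/-- The underlying `K`-vector space of `K{{t}}`: functions `x : ℤ → K` (coefficients of
`Σ x_i t^i`) with `inf_i v_K(x_i) > -∞` (i.e. bounded norms) and `x_i → 0` as `i → -∞`. -/
def mixedCarrier : Submodule K (ℤ → K) where
  carrier := {x | (∃ C : ℝ, ∀ i, ‖x i‖ ≤ C) ∧ Filter.Tendsto x Filter.atBot (nhds (0 : K))}
  zero_mem' := ⟨⟨0, fun i => by simp⟩, tendsto_const_nhds⟩
  add_mem' := by
    rintro x y ⟨⟨C, hC⟩, hx⟩ ⟨⟨D, hD⟩, hy⟩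
    refine ⟨⟨C + D, fun i => (norm_add_le _ _).trans (add_le_add (hC i) (hD i))⟩, ?_⟩
    convert hx.add hy using 1 <;> first | (funext i; rfl) | simp
  smul_mem' := by
    rintro c x ⟨⟨C, hC⟩, hx⟩
    refine ⟨⟨‖c‖ * C, fun i => ?_⟩, ?_⟩
    · have h : ‖(c • x) i‖ = ‖c‖ * ‖x i‖ := by simp [norm_smul]
      rw [h]
      exact mul_le_mul_of_nonneg_left (hC i) (norm_nonneg c)
    · convert hx.const_smul c using 1 <;> first | (funext i; rfl) | simp

/-- The field `K{{t}}`, as a `K`-vector space. -/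
abbrev Mt := ↥(mixedCarrier K)

/-- Basic neighbourhoods of zero for the higher topology on `K{{t}}`:
`Σ V_i t^i` where each `V_i` is an open neighbourhood of `0` in `K`, some `𝔭^c` is
contained in every `V_i`, and for every `l` eventually `𝔭^l ⊆ V_i`. -/
def mixedBasic (q : ℕ) : Set (Set (Mt K)) :=
  {S | ∃ Vs : ℤ → Set K, (∀ i, IsOpen (Vs i) ∧ (0 : K) ∈ Vs i) ∧
    (∃ c : ℤ, ∀ i, {x : K | ‖x‖ ≤ (q : ℝ) ^ (-c)} ⊆ Vs i) ∧
    (∀ l : ℤ, ∃ i0 : ℤ, ∀ i, i0 ≤ i → {x : K | ‖x‖ ≤ (q : ℝ) ^ (-l)} ⊆ Vs i) ∧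
    S = {f : Mt K | ∀ i, f.1 i ∈ Vs i}}

/-- The higher topology on `K{{t}}`. -/
def mixedTop (q : ℕ) : TopologicalSpace (Mt K) := addTopologyOf (mixedBasic K q)

/-- `Λ = Σ_{i∈ℤ} 𝔭^{n_i} t^i ⊆ K{{t}}` for a sequence `(n_i) ⊆ ℤ ∪ {-∞}`. -/
def mixedLambda (q : ℕ) (n : ℤ → WithBot ℤ) : Set (Mt K) :=
  {f | ∀ i, f.1 i ∈ pB K q (n i)}

/-- `B = Σ_{i∈ℤ} 𝔭^{k_i} t^i ⊆ K{{t}}` for a sequence `(k_i) ⊆ ℤ ∪ {∞}`. -/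
def mixedPT (q : ℕ) (k : ℤ → WithTop ℤ) : Set (Mt K) :=
  {f | ∀ i, f.1 i ∈ pT K q (k i)}

/-- `A = Σ_{i∈ℤ} 𝔭^{k_i} t^i ⊆ K{{t}}` for a sequence `(k_i) ⊆ ℤ ∪ {±∞}`. -/
def mixedPE (q : ℕ) (k : ℤ → WithBot (WithTop ℤ)) : Set (Mt K) :=
  {f | ∀ i, f.1 i ∈ pE K q (k i)}

/-- The admissible seminorm `‖Σ x_i t^i‖ = sup_i ‖x_i‖ q^{n_i}` on `K{{t}}`. -/
def mixedSeminorm (q : ℕ) (n : ℤ → WithBot ℤ) (f : Mt K) : ℝ :=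
  sSup {r : ℝ | ∃ i : ℤ, r = ‖f.1 i‖ * qpow q (n i)}

/-- The ring of integers `𝒪{{t}} ⊆ K{{t}}`. -/
def mixedIntegers : Set (Mt K) := {f | ∀ i, ‖f.1 i‖ ≤ 1}

/-- The rank-two ring of integers `Σ_{i<0} 𝔭 t^i + Σ_{i≥0} 𝒪 t^i ⊆ K{{t}}`. -/
def mixedRankTwo (q : ℕ) : Set (Mt K) :=
  {f | (∀ i : ℤ, i < 0 → ‖f.1 i‖ ≤ ((q : ℝ))⁻¹) ∧ ∀ i : ℤ, 0 ≤ i → ‖f.1 i‖ ≤ 1}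

/-- The monomial `t^i ∈ K{{t}}`. -/
def mixedT (i : ℤ) : Mt K :=
  ⟨fun j => if j = i then 1 else 0,
    ⟨⟨1, fun j => by by_cases h : j = i <;> simp [h]⟩, by
      refine (tendsto_const_nhds : Filter.Tendsto (fun _ : ℤ => (0 : K))
        Filter.atBot (nhds 0)).congr' ?_
      filter_upwards [Filter.eventually_le_atBot (i - 1)] with j hj
      have h : j ≠ i := by omega
      simp [h]⟩⟩

/-- Coefficients of the product of two elements of `K{{t}}` (Cauchy product). -/
def mixedMulCoeff (x y : Mt K) : ℤ → K := fun k => ∑' i : ℤ, x.1 i * y.1 (k - i)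

/-- Multiplication on `K{{t}}`. -/
def mixedMul (x y : Mt K) : Mt K :=
  if h : mixedMulCoeff K x y ∈ mixedCarrier K then ⟨_, h⟩ else 0

/-- The pairing `γ(x)(y) = π₀(xy) = Σ_i x_i y_{-i}` on `K{{t}}`. -/
def mixedPairing (x y : Mt K) : K := ∑' i : ℤ, x.1 i * y.1 (-i)

/-!
Every admissible `Λ_n = Σ 𝔭^{n_i} t^i` is itself one of the basic sets `Σ V_i t^i`, because closed
balls of the ultrametric field `K` are open. Conversely a basic set `Σ V_i t^i` contains `Λ_n` for
`n_i = c - k_i`, where `k_i ≤ i` is the largest `k` with `𝔭^{c-k} ⊆ V_i`. Hence the higher topology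
is the linear topology of the filter basis of the `Λ_n`, which are `𝒪`-modules and are carried into
one another by scalars (`a Λ_{n+k} ⊆ Λ_n` once `‖a‖ ≤ q^k`); continuity of scalar multiplication
then makes each `Λ_n` absorbing, i.e. a lattice.
-/

def IsAdmissible (n : ℤ → WithBot ℤ) : Prop :=
  (∃ c : ℤ, ∀ i : ℤ, n i ≤ (c : WithBot ℤ)) ∧
    ∀ l : ℤ, ∃ i0 : ℤ, ∀ i : ℤ, i0 ≤ i → n i ≤ (l : WithBot ℤ)

-- The cap `k ≤ i` keeps the search finite and is harmless: `P i l` is only needed for large `i`.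
lemma exists_le_tendsto_atBot_of_eventually {P : ℤ → ℤ → Prop} {c : ℤ} (hc : ∀ i, P i c)
    (hP : ∀ l, ∀ᶠ i in atTop, P i l) :
    ∃ n : ℤ → ℤ, (∀ i, n i ≤ c) ∧ Tendsto n atTop atBot ∧ ∀ i, P i (n i) := by
  refine ⟨fun i => c - Nat.findGreatest (fun k => P i (c - k)) i.toNat, fun i => by simp,
    tendsto_atTop_atBot.2 fun l => ?_,
    fun i => Nat.findGreatest_spec (P := fun k => P i (c - k)) (Nat.zero_le _)
      (by simpa using hc i)⟩
  obtain ⟨i0, hi0⟩ := eventually_atTop.1 (hP l)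
  refine ⟨max i0 (c - l), fun i hi => ?_⟩
  rcases le_or_gt c l with hcl | hlc
  · have := Int.natCast_nonneg (Nat.findGreatest (fun k => P i (c - k)) i.toNat)
    omega
  · have hk : (c - l).toNat ≤ Nat.findGreatest (fun k => P i (c - k)) i.toNat :=
      Nat.le_findGreatest (by omega) (by
        show P i (c - ((c - l).toNat : ℤ))
        rw [Int.toNat_of_nonneg (by omega), sub_sub_cancel]
        exact hi0 i (le_of_max_le_left hi))
    omega

lemma isAdmissible_coe {n : ℤ → ℤ} {c : ℤ} (hc : ∀ i, n i ≤ c) (hn : Tendsto n atTop atBot) :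
    IsAdmissible fun i => (n i : WithBot ℤ) :=
  ⟨⟨c, fun i => WithBot.coe_le_coe.2 (hc i)⟩, fun l =>
    (tendsto_atTop_atBot.1 hn l).imp fun _ h i hi => WithBot.coe_le_coe.2 (h i hi)⟩

lemma isAdmissible_bot : IsAdmissible fun _ => ⊥ :=
  ⟨⟨0, fun _ => bot_le⟩, fun _ => ⟨0, fun _ _ => bot_le⟩⟩

lemma IsAdmissible.sup {n m : ℤ → WithBot ℤ} (hn : IsAdmissible n) (hm : IsAdmissible m) :
    IsAdmissible (n ⊔ m) := by
  obtain ⟨⟨c, hc⟩, hn⟩ := hn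
  obtain ⟨⟨d, hd⟩, hm⟩ := hm
  refine ⟨⟨max c d, fun i => sup_le ((hc i).trans ?_) ((hd i).trans ?_)⟩, fun l => ?_⟩
  · exact WithBot.coe_le_coe.2 (le_max_left c d)
  · exact WithBot.coe_le_coe.2 (le_max_right c d)
  obtain ⟨i0, hi0⟩ := hn l
  obtain ⟨j0, hj0⟩ := hm l
  exact ⟨max i0 j0, fun i hi =>
    sup_le (hi0 i (le_of_max_le_left hi)) (hj0 i (le_of_max_le_right hi))⟩

lemma IsAdmissible.add_const {n : ℤ → WithBot ℤ} (hn : IsAdmissible n) (k : ℤ) :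
    IsAdmissible fun i => n i + k := by
  obtain ⟨⟨c, hc⟩, hn⟩ := hn
  refine ⟨⟨c + k, fun i => ?_⟩, fun l => (hn (l - k)).imp fun _ h i hi => ?_⟩
  · simpa using add_le_add_left (hc i) (k : WithBot ℤ)
  · simpa [← WithBot.coe_add] using add_le_add_left (h i hi) (k : WithBot ℤ)

section LatticeBasis

variable {K}

lemma IsOSubmodule.neg_mem {V : Type} [AddCommGroup V] [Module K V] {S : Set V}
    (hS : IsOSubmodule K S) {x : V} (hx : x ∈ S) : -x ∈ S := by
  simpa using hS.2.2 (-1) (by simp) x hx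

lemma IsOSubmodule.isLatticeSet_of_mem_nhds {V : Type} [AddCommGroup V] [Module K V]
    [TopologicalSpace V] [ContinuousSMul K V] {S : Set V} (hS : IsOSubmodule K S)
    (h0 : S ∈ 𝓝 (0 : V)) : IsLatticeSet K S := by
  refine ⟨hS, fun v => ?_⟩
  have hv : Tendsto (fun a : K => a • v) (𝓝[≠] 0) (𝓝 0) :=
    ((continuous_id.smul continuous_const).tendsto' 0 0 (zero_smul K v)).mono_left
      nhdsWithin_le_nhds
  obtain ⟨a, ha, ha0⟩ := ((hv.eventually_mem h0).and self_mem_nhdsWithin).exists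
  exact ⟨a, ha0, ha⟩

lemma addTopologyOf_eq_topology {W : Type} [AddCommGroup W] (𝔅 : AddGroupFilterBasis W)
    {B : Set (Set W)} (h𝔅B : ∀ U ∈ 𝔅, U ∈ B) (hB𝔅 : ∀ U ∈ B, ∃ V ∈ 𝔅, V ⊆ U) :
    addTopologyOf B = 𝔅.topology := by
  have h : (⨅ U ∈ B, 𝓟 U) = 𝔅.filter := by
    refine le_antisymm (fun S hS => ?_) (le_iInf₂ fun U hU => ?_)
    · obtain ⟨V, hV, hVS⟩ := 𝔅.mem_filter_iff.1 hS
      exact mem_of_superset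
        (mem_iInf_of_mem V (mem_iInf_of_mem (h𝔅B V hV) (mem_principal_self V))) hVS
    · obtain ⟨V, hV, hVU⟩ := hB𝔅 U hU
      exact le_principal_iff.2 (mem_of_superset (𝔅.mem_filter_of_mem hV) hVU)
  simp only [addTopologyOf, h]
  rfl

variable {q : ℕ}

lemma pB_coe (m : ℤ) : pB K q m = {x : K | ‖x‖ ≤ (q : ℝ) ^ (-m)} := rfl

lemma pB_antitone (hq : 1 ≤ q) : Antitone (pB K q) := by
  intro n n' h
  induction n using WithBot.recBotCoe with
  | bot => exact subset_univ _
  | coe m =>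
    induction n' using WithBot.recBotCoe with
    | bot => exact absurd h (by simp)
    | coe m' =>
      intro x (hx : ‖x‖ ≤ (q : ℝ) ^ (-m'))
      exact hx.trans (zpow_le_zpow_right₀ (Nat.one_le_cast.2 hq) (by simpa using h))

lemma isOpen_pB [IsUltrametricDist K] (hq : 0 < q) (n : WithBot ℤ) : IsOpen (pB K q n) := by
  induction n using WithBot.recBotCoe with
  | bot => exact isOpen_univ
  | coe m =>
    convert IsUltrametricDist.isOpen_closedBall (0 : K) (zpow_pos (Nat.cast_pos.2 hq) (-m)).ne'
    ext x
    simp [pB_coe]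

lemma isOSubmodule_pB [IsUltrametricDist K] (n : WithBot ℤ) : IsOSubmodule K (pB K q n) := by
  induction n using WithBot.recBotCoe with
  | bot => exact ⟨trivial, fun _ _ _ _ => trivial, fun _ _ _ _ => trivial⟩
  | coe m =>
    refine ⟨?_, fun x hx y hy => ?_, fun c hc x hx => ?_⟩
    · show ‖(0 : K)‖ ≤ _
      rw [norm_zero]
      positivity
    · exact (IsUltrametricDist.norm_add_le_max x y).trans (max_le hx hy)
    · show ‖c • x‖ ≤ _
      rw [smul_eq_mul, norm_mul]
      exact (mul_le_of_le_one_left (norm_nonneg x) hc).trans hx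

lemma mul_mem_pB (hq : 0 < q) {n : WithBot ℤ} {k : ℤ} {a x : K} (ha : ‖a‖ ≤ (q : ℝ) ^ k)
    (hx : x ∈ pB K q (n + k)) : a * x ∈ pB K q n := by
  induction n using WithBot.recBotCoe with
  | bot => exact trivial
  | coe m =>
    have hq' : (0 : ℝ) < q := Nat.cast_pos.2 hq
    calc ‖a * x‖ = ‖a‖ * ‖x‖ := norm_mul a x
      _ ≤ (q : ℝ) ^ k * (q : ℝ) ^ (-(m + k)) := by
        gcongr
        exact hx
      _ = (q : ℝ) ^ (-m) := by rw [← zpow_add₀ hq'.ne']; ring_nf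

lemma isOSubmodule_mixedLambda [IsUltrametricDist K] (n : ℤ → WithBot ℤ) :
    IsOSubmodule K (mixedLambda K q n) :=
  ⟨fun i => (isOSubmodule_pB (n i)).1,
    fun _ hf _ hg i => (isOSubmodule_pB (n i)).2.1 _ (hf i) _ (hg i),
    fun c hc _ hf i => (isOSubmodule_pB (n i)).2.2 c hc _ (hf i)⟩

lemma mixedLambda_antitone (hq : 1 ≤ q) : Antitone (mixedLambda K q) :=
  fun _ _ h _ hf i => pB_antitone hq (h i) (hf i)

lemma mem_mixedLambda_of_norm_le (hq : 1 ≤ q) {n : ℤ → WithBot ℤ} {c : ℤ}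
    (hn : ∀ i, n i ≤ c) {f : Mt K} (hf : ∀ i, ‖f.1 i‖ ≤ (q : ℝ) ^ (-c)) :
    f ∈ mixedLambda K q n :=
  fun i => pB_antitone hq (hn i) (hf i)

lemma smul_mem_mixedLambda (hq : 0 < q) {n : ℤ → WithBot ℤ} {k : ℤ} {a : K}
    (ha : ‖a‖ ≤ (q : ℝ) ^ k) {f : Mt K} (hf : f ∈ mixedLambda K q fun i => n i + k) :
    a • f ∈ mixedLambda K q n :=
  fun i => mul_mem_pB hq ha (hf i)

lemma eventually_smul_mem_mixedLambda (hq : 1 ≤ q) {n : ℤ → WithBot ℤ} (hn : IsAdmissible n)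
    (f : Mt K) : ∀ᶠ a in 𝓝 (0 : K), a • f ∈ mixedLambda K q n := by
  obtain ⟨c, hc⟩ := hn.1
  obtain ⟨C, hC⟩ := f.2.1
  have hC' : 0 < max C 1 := lt_max_of_lt_right one_pos
  have hqc : (0 : ℝ) < (q : ℝ) ^ (-c) := zpow_pos (by exact_mod_cast hq) _
  filter_upwards [Metric.closedBall_mem_nhds (0 : K) (div_pos hqc hC')] with a ha
  refine mem_mixedLambda_of_norm_le hq hc fun i => ?_
  rw [mem_closedBall_zero_iff, le_div_iff₀ hC'] at ha
  calc ‖a * f.1 i‖ = ‖a‖ * ‖f.1 i‖ := norm_mul _ _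
    _ ≤ ‖a‖ * max C 1 := by gcongr; exact (hC i).trans (le_max_left C 1)
    _ ≤ (q : ℝ) ^ (-c) := ha

lemma mixedLambda_mem_mixedBasic [IsUltrametricDist K] (hq : 1 ≤ q) {n : ℤ → WithBot ℤ}
    (hn : IsAdmissible n) : mixedLambda K q n ∈ mixedBasic K q := by
  obtain ⟨⟨c, hc⟩, hn⟩ := hn
  refine ⟨fun i => pB K q (n i), fun i => ⟨isOpen_pB hq _, (isOSubmodule_pB _).1⟩,
    ⟨c, fun i => pB_antitone hq (hc i)⟩, fun l => ?_, rfl⟩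
  obtain ⟨i0, hi0⟩ := hn l
  exact ⟨i0, fun i hi => pB_antitone hq (hi0 i hi)⟩

lemma exists_mixedLambda_subset_of_mem_mixedBasic {U : Set (Mt K)} (hU : U ∈ mixedBasic K q) :
    ∃ n, IsAdmissible n ∧ mixedLambda K q n ⊆ U := by
  obtain ⟨V, -, ⟨c, hc⟩, hV, rfl⟩ := hU
  obtain ⟨n, hnc, hn, hnV⟩ := exists_le_tendsto_atBot_of_eventually (P := fun i l => pB K q l ⊆ V i)
    hc fun l => eventually_atTop.2 (hV l)
  exact ⟨_, isAdmissible_coe hnc hn, fun f hf i => hnV i (hf i)⟩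

def latticeFilterBasis [IsUltrametricDist K] (hq : 1 < q) : ModuleFilterBasis K (Mt K) where
  sets := mixedLambda K q '' {n | IsAdmissible n}
  nonempty := ⟨_, _, isAdmissible_bot, rfl⟩
  inter_sets := by
    rintro _ _ ⟨n, hn, rfl⟩ ⟨m, hm, rfl⟩
    exact ⟨_, ⟨_, hn.sup hm, rfl⟩, subset_inter (mixedLambda_antitone hq.le le_sup_left)
      (mixedLambda_antitone hq.le le_sup_right)⟩
  zero' := by
    rintro _ ⟨n, -, rfl⟩
    exact (isOSubmodule_mixedLambda n).1
  add' := by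
    rintro _ ⟨n, hn, rfl⟩
    refine ⟨_, ⟨n, hn, rfl⟩, ?_⟩
    rintro _ ⟨f, hf, g, hg, rfl⟩
    exact (isOSubmodule_mixedLambda n).2.1 f hf g hg
  neg' := by
    rintro _ ⟨n, hn, rfl⟩
    exact ⟨_, ⟨n, hn, rfl⟩, fun f hf => (isOSubmodule_mixedLambda n).neg_mem hf⟩
  conj' := by
    rintro f₀ _ ⟨n, hn, rfl⟩
    exact ⟨_, ⟨n, hn, rfl⟩, fun f hf => by simpa using hf⟩
  smul' := by
    rintro _ ⟨n, hn, rfl⟩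
    refine ⟨Metric.closedBall 0 1, Metric.closedBall_mem_nhds 0 one_pos, _, ⟨n, hn, rfl⟩, ?_⟩
    rintro _ ⟨a, ha, f, hf, rfl⟩
    exact (isOSubmodule_mixedLambda n).2.2 a (mem_closedBall_zero_iff.1 ha) f hf
  smul_left' := by
    rintro a _ ⟨n, hn, rfl⟩
    obtain ⟨k, hk⟩ := pow_unbounded_of_one_lt ‖a‖ (Nat.one_lt_cast.2 hq)
    exact ⟨_, ⟨_, hn.add_const k, rfl⟩,
      fun f hf => smul_mem_mixedLambda (by omega) (by exact_mod_cast hk.le) hf⟩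
  smul_right' := by
    rintro f _ ⟨n, hn, rfl⟩
    exact eventually_smul_mem_mixedLambda hq.le hn f

lemma mixedTop_eq_topology [IsUltrametricDist K] (hq : 1 < q) :
    mixedTop K q = (latticeFilterBasis hq).topology :=
  addTopologyOf_eq_topology _ (fun _ ⟨_, hn, h⟩ => h ▸ mixedLambda_mem_mixedBasic hq.le hn)
    fun _ hU =>
      let ⟨n, hn, hnU⟩ := exists_mixedLambda_subset_of_mem_mixedBasic hU
      ⟨_, ⟨n, hn, rfl⟩, hnU⟩

lemma hasBasis_nhds_zero_latticeFilterBasis [IsUltrametricDist K] (hq : 1 < q) :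
    (@nhds (Mt K) (latticeFilterBasis hq).topology 0).HasBasis IsAdmissible (mixedLambda K q) :=
  ⟨fun S => by
    rw [(latticeFilterBasis hq).toAddGroupFilterBasis.nhds_zero_hasBasis.mem_iff]
    exact ⟨fun ⟨_, ⟨n, hn, hU⟩, hS⟩ => ⟨n, hn, hU ▸ hS⟩, fun ⟨n, hn, hS⟩ => ⟨_, ⟨n, hn, rfl⟩, hS⟩⟩⟩

end LatticeBasis

/-- The higher topology makes `K{{t}}` into a locally convex topological
`K`-vector space: for every sequence `(n_i) ⊆ ℤ ∪ {-∞}` which is bounded above and satisfies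
`n_i → -∞` as `i → ∞`, the set `Λ = Σ_{i∈ℤ} 𝔭^{n_i} t^i` is an `𝒪`-lattice in `K{{t}}`, and
these sets form a basis of neighbourhoods of zero for the higher topology. -/
theorem statement4 (q : ℕ) (hK : IsCharZeroLocalField K q) :
    IsLCTVS K (mixedTop K q) ∧
    (∀ n : ℤ → WithBot ℤ,
      (∃ c : ℤ, ∀ i : ℤ, n i ≤ (c : WithBot ℤ)) →
      (∀ l : ℤ, ∃ i0 : ℤ, ∀ i : ℤ, i0 ≤ i → n i ≤ (l : WithBot ℤ)) →
      IsLatticeSet K (mixedLambda K q n)) ∧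
    (∀ S : Set (Mt K),
      S ∈ @nhds _ (mixedTop K q) 0 ↔
        ∃ n : ℤ → WithBot ℤ, (∃ c : ℤ, ∀ i : ℤ, n i ≤ (c : WithBot ℤ)) ∧
          (∀ l : ℤ, ∃ i0 : ℤ, ∀ i : ℤ, i0 ≤ i → n i ≤ (l : WithBot ℤ)) ∧
          mixedLambda K q n ⊆ S) := by
  have := IsUltrametricDist.isUltrametricDist_of_forall_norm_add_le_max_norm hK.nonarch
  rw [mixedTop_eq_topology hK.one_lt_q]
  let := (latticeFilterBasis (K := K) hK.one_lt_q).topology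
  have hbasis := hasBasis_nhds_zero_latticeFilterBasis (K := K) hK.one_lt_q
  have hlattice : ∀ n, IsAdmissible n → IsLatticeSet K (mixedLambda K q n) := fun n hn =>
    (isOSubmodule_mixedLambda n).isLatticeSet_of_mem_nhds (hbasis.mem_of_mem hn)
  refine ⟨⟨inferInstance, inferInstance, fun S hS => ?_⟩, fun n hc hl => hlattice n ⟨hc, hl⟩,
    fun S => ?_⟩
  · obtain ⟨n, hn, hS⟩ := hbasis.mem_iff.1 hS
    exact ⟨_, hlattice n hn, hbasis.mem_of_mem hn, hS⟩
  · simp only [hbasis.mem_iff, IsAdmissible, and_assoc]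

end TwoDimLF
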